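/- arXiv:0711.1680 — 5 statements merged into one kernel-verified Lean document; each statement's English description precedes it below -/
import Mathlib

section
/- If W₁ and W₂ are n×n matrices and every column of W₁ contains at most one nonzero entry, then (W₁W₂)^{∨2} = W₁^{∨2} · W₂^{∨2}. -/
open Matrix BigOperators Filter

/-- Index set of pairs `(i,j)` with `i < j`. -/
abbrev Pairs (n : ℕ) := {p : Fin n × Fin n // p.1 < p.2}

/-- Zeon second power: matrix of 2×2 permanents. -/
def zeonSq {n : ℕ} {R : Type*} [CommRing R] (A : Matrix (Fin n) (Fin n) R) :
    Matrix (Pairs n) (Pairs n) R :=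
  Matrix.of fun I J =>
    A I.1.1 J.1.1 * A I.1.2 J.1.2 + A I.1.1 J.1.2 * A I.1.2 J.1.1

/-- `Mat(X)`: symmetric matrix with zero diagonal built from a vector indexed by pairs. -/
def matOf {n : ℕ} {R : Type*} [CommRing R] (X : Pairs n → R) :
    Matrix (Fin n) (Fin n) R :=
  Matrix.of fun i j =>
    if h : i < j then X ⟨(i, j), h⟩ else if h' : j < i then X ⟨(j, i), h'⟩ else 0

/-!
Expanding, `(AB)^{∨2}_{(i,j),(a,b)} = ∑_{k,l} A_{ik} A_{jl} per B_{(k,l),(a,b)}`, and the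
permanent factor is symmetric in `(k,l)`. Grouping the terms `(k,l)` and `(l,k)` with `k < l`
produces exactly `(A^{∨2} B^{∨2})_{(i,j),(a,b)}`; what is left over is the diagonal `k = l`,
whose terms carry `A_{ik} A_{jk}` and so vanish when distinct rows of `A` never share a
nonzero column.
-/

open Finset

theorem Fintype.sum_prod_eq_sum_lt_add_sum_diag {α M : Type*} [LinearOrder α] [Fintype α]
    [AddCommMonoid M] (f : α × α → M) :
    ∑ p, f p = ∑ p : {p : α × α // p.1 < p.2}, (f p + f p.1.swap) + ∑ a, f (a, a) := by
  have hsplit : ∀ p : α × α, f p = (if p.1 < p.2 then f p else 0) +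
      (if p.2 < p.1 then f p else 0) + (if p.1 = p.2 then f p else 0) := by
    rintro ⟨a, b⟩
    rcases lt_trichotomy a b with h | rfl | h
    · simp [h, h.ne, h.not_gt]
    · simp
    · simp [h, h.ne', h.not_gt]
  have hswap : ∑ p : α × α, (if p.2 < p.1 then f p else 0) =
      ∑ p : α × α, (if p.1 < p.2 then f p.swap else 0) :=
    Fintype.sum_equiv (Equiv.prodComm α α) _ _ fun p => rfl
  have hdiag : ∑ p : α × α, (if p.1 = p.2 then f p else 0) = ∑ a, f (a, a) := by
    simp [Fintype.sum_prod_type]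
  rw [Fintype.sum_congr _ _ hsplit, sum_add_distrib, sum_add_distrib, hswap, hdiag,
    ← sum_add_distrib]
  simp_rw [← ite_add_zero, ← sum_filter]
  rw [sum_subtype (p := fun p : α × α => p.1 < p.2) _ (by simp)]

theorem zeonSq_mul_apply {n : ℕ} {R : Type*} [CommRing R] (A B : Matrix (Fin n) (Fin n) R)
    (I J : Pairs n) :
    zeonSq (A * B) I J = ∑ p : Fin n × Fin n, A I.1.1 p.1 * A I.1.2 p.2 *
      (B p.1 J.1.1 * B p.2 J.1.2 + B p.1 J.1.2 * B p.2 J.1.1) := by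
  simp only [zeonSq, of_apply, mul_apply, Fintype.sum_mul_sum, ← sum_add_distrib,
    Fintype.sum_prod_type]
  refine Fintype.sum_congr _ _ fun k => Fintype.sum_congr _ _ fun l => ?_
  ring

theorem zeonSq_mul_of_rows_mul_eq_zero {n : ℕ} {R : Type*} [CommRing R]
    {A : Matrix (Fin n) (Fin n) R} (B : Matrix (Fin n) (Fin n) R)
    (hA : ∀ k i i', i ≠ i' → A i k * A i' k = 0) :
    zeonSq (A * B) = zeonSq A * zeonSq B := by
  ext I J
  have hdiag : ∀ k, A I.1.1 k * A I.1.2 k = 0 := fun k => hA k _ _ I.2.ne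
  rw [zeonSq_mul_apply, Fintype.sum_prod_eq_sum_lt_add_sum_diag, mul_apply]
  simp only [hdiag, zero_mul, sum_const_zero, add_zero]
  refine Fintype.sum_congr _ _ fun p => ?_
  simp only [zeonSq, of_apply, Prod.fst_swap, Prod.snd_swap]
  ring

theorem stmt1 {n : ℕ} (W₁ W₂ : Matrix (Fin n) (Fin n) ℚ)
    (hcol : ∀ j i i', W₁ i j ≠ 0 → W₁ i' j ≠ 0 → i = i') :
    zeonSq (W₁ * W₂) = zeonSq W₁ * zeonSq W₂ :=
  zeonSq_mul_of_rows_mul_eq_zero W₂ fun k i i' hne => by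
    by_contra h
    exact hne (hcol k i i' (left_ne_zero_of_mul h) (right_ne_zero_of_mul h))
end

section
/- For any n×n matrix A and any vector X ∈ ℚ^{C(n,2)}, the matrix Mat(X·A^{∨2}) equals AᵀX̂A − D⁺, where D⁺ is the diagonal matrix with entries D⁺_{ii} = (AᵀX̂A)_{ii}; in particular tr D⁺ = tr(AᵀX̂A). Moreover, if A and X have nonnegative entries, then D⁺ has nonnegative entries. -/
open Matrix BigOperators Filter

/-!
Splitting `X̂ = U + Uᵀ` with `U` strictly upper triangular gives
`(AᵀX̂A)ᵢⱼ = ∑_{k<l} x_{kl} (A_{ki}A_{lj} + A_{kj}A_{li})`, which is the `(i,j)` entry of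
`X·A^{∨2}`. As `AᵀX̂A` is symmetric, `Mat` of its strictly upper part is `AᵀX̂A` minus its diagonal,
and the displayed formula makes the diagonal entries visibly nonnegative.
-/

theorem Matrix.IsSymm.transpose_mul_mul {ι α : Type*} [Fintype ι] [CommSemiring α]
    {M : Matrix ι ι α} (hM : M.IsSymm) (A : Matrix ι ι α) : (Aᵀ * M * A).IsSymm := by
  simp only [IsSymm, transpose_mul, transpose_transpose, hM.eq, Matrix.mul_assoc]

section

variable {n : ℕ} {R : Type*} [CommRing R]

def upperOf (X : Pairs n → R) : Matrix (Fin n) (Fin n) R :=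
  of fun i j => if h : i < j then X ⟨(i, j), h⟩ else 0

theorem matOf_eq_upperOf_add_transpose (X : Pairs n → R) :
    matOf X = upperOf X + (upperOf X)ᵀ := by
  ext i j
  simp only [matOf, upperOf, Matrix.add_apply, transpose_apply, of_apply]
  rcases lt_trichotomy i j with h | rfl | h
  · simp [h, h.not_gt]
  · simp
  · simp [h, h.not_gt]

theorem isSymm_matOf (X : Pairs n → R) : (matOf X).IsSymm := by
  rw [matOf_eq_upperOf_add_transpose]
  exact isSymm_add_transpose_self _

theorem transpose_mul_upperOf_mul_apply (A : Matrix (Fin n) (Fin n) R) (X : Pairs n → R)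
    (i j : Fin n) :
    (Aᵀ * upperOf X * A) i j = ∑ I : Pairs n, X I * A I.1.1 i * A I.1.2 j := by
  have hexpand : (Aᵀ * upperOf X * A) i j =
      ∑ p : Fin n × Fin n, A p.1 i * upperOf X p.1 p.2 * A p.2 j := by
    simp only [mul_apply, transpose_apply, Finset.sum_mul, Fintype.sum_prod_type]
    exact Finset.sum_comm
  have hlower : ∑ p : {p : Fin n × Fin n // ¬p.1 < p.2},
      A p.1.1 i * upperOf X p.1.1 p.1.2 * A p.1.2 j = 0 :=
    Finset.sum_eq_zero fun p _ => by simp [upperOf, p.2]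
  rw [hexpand, ← Fintype.sum_subtype_add_sum_subtype (fun p : Fin n × Fin n => p.1 < p.2), hlower,
    add_zero]
  refine Finset.sum_congr rfl fun I _ => ?_
  simp only [upperOf, of_apply, dif_pos I.2]
  ring

theorem transpose_mul_matOf_mul_apply (A : Matrix (Fin n) (Fin n) R) (X : Pairs n → R)
    (i j : Fin n) :
    (Aᵀ * matOf X * A) i j =
      ∑ I : Pairs n, X I * (A I.1.1 i * A I.1.2 j + A I.1.1 j * A I.1.2 i) := by
  have htranspose : Aᵀ * (upperOf X)ᵀ * A = (Aᵀ * upperOf X * A)ᵀ := by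
    simp only [transpose_mul, transpose_transpose, Matrix.mul_assoc]
  rw [matOf_eq_upperOf_add_transpose, Matrix.mul_add, Matrix.add_mul, Matrix.add_apply, htranspose,
    transpose_apply, transpose_mul_upperOf_mul_apply, transpose_mul_upperOf_mul_apply,
    ← Finset.sum_add_distrib]
  exact Finset.sum_congr rfl fun I _ => by ring

theorem vecMul_zeonSq_apply (A : Matrix (Fin n) (Fin n) R) (X : Pairs n → R) (J : Pairs n) :
    (X ᵥ* zeonSq A) J = (Aᵀ * matOf X * A) J.1.1 J.1.2 := by
  rw [transpose_mul_matOf_mul_apply]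
  rfl

theorem matOf_restrict_of_isSymm {M : Matrix (Fin n) (Fin n) R} (hM : M.IsSymm) :
    matOf (fun J : Pairs n => M J.1.1 J.1.2) = M - diagonal (fun i => M i i) := by
  ext i j
  rcases lt_trichotomy i j with h | rfl | h
  · simp [matOf, h, h.ne]
  · simp [matOf]
  · simp [matOf, h, h.not_gt, h.ne', hM.apply]

theorem transpose_mul_matOf_mul_diag_nonneg [PartialOrder R] [IsOrderedRing R]
    {A : Matrix (Fin n) (Fin n) R} {X : Pairs n → R} (hA : ∀ i j, 0 ≤ A i j) (hX : ∀ I, 0 ≤ X I)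
    (i : Fin n) : 0 ≤ (Aᵀ * matOf X * A) i i := by
  rw [transpose_mul_matOf_mul_apply]
  refine Finset.sum_nonneg fun I _ => ?_
  have := hA I.1.1 i
  have := hA I.1.2 i
  have := hX I
  positivity

end

theorem stmt4 {n : ℕ} (A : Matrix (Fin n) (Fin n) ℚ) (X : Pairs n → ℚ) :
    matOf (X ᵥ* zeonSq A) =
        Aᵀ * matOf X * A - Matrix.diagonal (fun i => (Aᵀ * matOf X * A) i i) ∧
      Matrix.trace (Matrix.diagonal (fun i => (Aᵀ * matOf X * A) i i)) =
        Matrix.trace (Aᵀ * matOf X * A) ∧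
      ((∀ i j, 0 ≤ A i j) → (∀ I, 0 ≤ X I) →
        ∀ i, 0 ≤ (Aᵀ * matOf X * A) i i) := by
  refine ⟨?_, trace_diagonal _, transpose_mul_matOf_mul_diag_nonneg⟩
  rw [show X ᵥ* zeonSq A = fun J => (Aᵀ * matOf X * A) J.1.1 J.1.2 from
    funext (vecMul_zeonSq_apply A X)]
  exact matOf_restrict_of_isSymm ((isSymm_matOf X).transpose_mul_mul A)
end

section
/- For any n×n matrix A and any vector X ∈ ℚ^{C(n,2)}, the matrix Mat(A^{∨2}·Xᵀ) equals AX̂Aᵀ − D⁻, where D⁻ is the diagonal matrix with entries D⁻_{ii} = (AX̂Aᵀ)_{ii}; in particular tr D⁻ = tr(AX̂Aᵀ). -/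
open Matrix BigOperators Filter

theorem Fintype.sum_prod_eq_sum_lt_add_swap {ι M : Type*} [Fintype ι] [LinearOrder ι]
    [AddCommMonoid M] (f : ι × ι → M) (hf : ∀ i, f (i, i) = 0) :
    ∑ p, f p = ∑ p : {p : ι × ι // p.1 < p.2}, (f p + f p.1.swap) := by
  have hsplit : ∀ p : ι × ι,
      f p = (if p.1 < p.2 then f p else 0) + (if p.2 < p.1 then f p else 0) := by
    rintro ⟨i, j⟩
    rcases lt_trichotomy i j with h | rfl | h
    · simp [h, h.not_gt]
    · simp [hf]
    · simp [h, h.not_gt]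
  have hswap : ∑ p : ι × ι, (if p.2 < p.1 then f p else 0)
      = ∑ p : ι × ι, (if p.1 < p.2 then f p.swap else 0) :=
    (Equiv.sum_comp (Equiv.prodComm ι ι) _).symm
  rw [Fintype.sum_congr _ _ hsplit, Finset.sum_add_distrib, hswap, ← Finset.sum_add_distrib,
    ← Finset.sum_subtype (Finset.univ.filter fun p : ι × ι => p.1 < p.2) (by simp)
      (fun p => f p + f p.swap), Finset.sum_filter]
  exact Fintype.sum_congr _ _ fun p => by rw [ite_add_ite, add_zero]

section matOf

variable {n : ℕ} {R : Type*} [CommRing R] (X : Pairs n → R)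

theorem matOf_apply_of_lt {i j : Fin n} (h : i < j) : matOf X i j = X ⟨(i, j), h⟩ := by
  simp [matOf, h]

theorem matOf_apply_of_gt {i j : Fin n} (h : j < i) : matOf X i j = X ⟨(j, i), h⟩ := by
  simp [matOf, h, h.not_gt]

theorem matOf_apply_self (i : Fin n) : matOf X i i = 0 := by
  simp [matOf]

theorem matOf_isSymm : (matOf X).IsSymm := by
  refine IsSymm.ext fun i j => ?_
  rcases lt_trichotomy i j with h | rfl | h
  · rw [matOf_apply_of_lt X h, matOf_apply_of_gt X h]
  · rfl
  · rw [matOf_apply_of_lt X h, matOf_apply_of_gt X h]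

theorem matOf_eq_sub_diagonal {S : Matrix (Fin n) (Fin n) R} (hS : S.IsSymm)
    (hX : ∀ K : Pairs n, X K = S K.1.1 K.1.2) :
    matOf X = S - diagonal (fun i => S i i) := by
  ext i j
  rcases lt_trichotomy i j with h | rfl | h
  · rw [Matrix.sub_apply, diagonal_apply_ne _ h.ne, sub_zero, matOf_apply_of_lt X h, hX]
  · rw [Matrix.sub_apply, diagonal_apply_eq, sub_self, matOf_apply_self]
  · rw [Matrix.sub_apply, diagonal_apply_ne _ h.ne', sub_zero, matOf_apply_of_gt X h, hX, hS.apply]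

end matOf

theorem isSymm_mul_mul_transpose {m k R : Type*} [Fintype k] [CommSemiring R]
    (A : Matrix m k R) {M : Matrix k k R} (hM : M.IsSymm) : (A * M * Aᵀ).IsSymm := by
  rw [IsSymm, transpose_mul, transpose_mul, transpose_transpose, hM.eq, Matrix.mul_assoc]

theorem mul_matOf_mul_transpose_apply {n : ℕ} {R : Type*} [CommRing R]
    (A : Matrix (Fin n) (Fin n) R) (X : Pairs n → R) (i j : Fin n) :
    (A * matOf X * Aᵀ) i j
      = ∑ K : Pairs n, (A i K.1.1 * A j K.1.2 + A i K.1.2 * A j K.1.1) * X K := by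
  have hdouble : (A * matOf X * Aᵀ) i j
      = ∑ p : Fin n × Fin n, A i p.1 * matOf X p.1 p.2 * A j p.2 := by
    simp only [mul_apply, transpose_apply, Finset.sum_mul, Fintype.sum_prod_type]
    exact Finset.sum_comm
  have hdiag (k : Fin n) : A i k * matOf X k k * A j k = 0 := by
    rw [matOf_apply_self, mul_zero, zero_mul]
  rw [hdouble, Fintype.sum_prod_eq_sum_lt_add_swap _ hdiag]
  refine Fintype.sum_congr _ _ fun K => ?_
  rw [Prod.fst_swap, Prod.snd_swap, matOf_apply_of_lt X K.2, matOf_apply_of_gt X K.2]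
  ring

theorem zeonSq_mulVec_apply {n : ℕ} {R : Type*} [CommRing R]
    (A : Matrix (Fin n) (Fin n) R) (X : Pairs n → R) (K : Pairs n) :
    (zeonSq A *ᵥ X) K = (A * matOf X * Aᵀ) K.1.1 K.1.2 := by
  rw [mul_matOf_mul_transpose_apply]
  rfl

theorem stmt5 {n : ℕ} (A : Matrix (Fin n) (Fin n) ℚ) (X : Pairs n → ℚ) :
    matOf (zeonSq A *ᵥ X) =
        A * matOf X * Aᵀ - Matrix.diagonal (fun i => (A * matOf X * Aᵀ) i i) ∧
      Matrix.trace (Matrix.diagonal (fun i => (A * matOf X * Aᵀ) i i)) =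
        Matrix.trace (A * matOf X * Aᵀ) :=
  ⟨matOf_eq_sub_diagonal _ (isSymm_mul_mul_transpose A (matOf_isSymm X))
      (zeonSq_mulVec_apply A X),
    trace_diagonal _⟩
end

section
/- Let A be an n×n row-stochastic matrix whose state transition diagram has communicating classes C₀,…,C_{s−1} with s > 1 partitioning {1,…,n} (i.e., A is reducible with no transient states: A_{ij} > 0 implies i and j lie in the same class). Define X ∈ ℚ^{C(n,2)} by x_{ij} = 0 if i and j lie in the same class C_k, and x_{ij} = 1 otherwise. Then A^{∨2}·Xᵀ = Xᵀ; in particular det(I − A^{∨2}) = 0. -/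
/-! Since `A` never moves mass between classes, `A ⊗ A` fixes every vector `(k, l) ↦ ψ (c k) (c l)`
that only depends on the classes of its coordinates. For symmetric `ψ` vanishing on the diagonal,
the zeon square acting on the pair vector of `ψ` computes exactly that double sum, so it fixes
`X`; and `X ≠ 0` because there are at least two classes, whence `det (1 - A^{∨2}) = 0`. -/

open Matrix BigOperators Filter

theorem sum_subtype_lt_add_swap {α M : Type*} [Fintype α] [LinearOrder α] [AddCommMonoid M]
    (F : α × α → M) (hF : ∀ a, F (a, a) = 0) :
    ∑ p : {p : α × α // p.1 < p.2}, (F p.1 + F p.1.swap) = ∑ p, F p := by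
  have hsplit : ∀ p : α × α,
      F p = (if p.1 < p.2 then F p else 0) + (if p.2 < p.1 then F p else 0) := by
    rintro ⟨a, b⟩
    rcases lt_trichotomy a b with h | rfl | h
    · simp [h, h.not_gt]
    · simp [hF]
    · simp [h, h.not_gt]
  have hswap : ∑ p : α × α, (if p.2 < p.1 then F p else 0)
      = ∑ p : α × α, (if p.1 < p.2 then F p.swap else 0) :=
    Fintype.sum_equiv (Equiv.prodComm α α) _ _ fun _ => rfl
  calc ∑ p : {p : α × α // p.1 < p.2}, (F p.1 + F p.1.swap)
      = ∑ p : α × α, (if p.1 < p.2 then F p + F p.swap else 0) := by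
        rw [← Finset.sum_subtype {p : α × α | p.1 < p.2} (by simp) fun p => F p + F p.swap,
          Finset.sum_filter]
    _ = ∑ p : α × α, ((if p.1 < p.2 then F p else 0) + (if p.2 < p.1 then F p else 0)) := by
        rw [Finset.sum_add_distrib, hswap, ← Finset.sum_add_distrib]
        exact Finset.sum_congr rfl fun p _ => by split_ifs <;> simp
    _ = ∑ p, F p := Fintype.sum_congr _ _ fun p => (hsplit p).symm

theorem zeonSq_mulVec_apply_s14 {n : ℕ} {R : Type*} [CommRing R] (A : Matrix (Fin n) (Fin n) R)
    (φ : Fin n → Fin n → R) (hφ : ∀ k l, φ k l = φ l k) (hφ₀ : ∀ k, φ k k = 0) (I : Pairs n) :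
    (zeonSq A *ᵥ fun J => φ J.1.1 J.1.2) I = ∑ k, ∑ l, A I.1.1 k * A I.1.2 l * φ k l := by
  rw [← Fintype.sum_prod_type' (fun k l => A I.1.1 k * A I.1.2 l * φ k l),
    ← sum_subtype_lt_add_swap _ fun k => by simp [hφ₀]]
  refine Finset.sum_congr rfl fun J _ => ?_
  simp only [zeonSq, of_apply, Prod.fst_swap, Prod.snd_swap, hφ J.1.2 J.1.1]
  ring

theorem sum_mul_comp_of_closed {ι κ R : Type*} [Fintype ι] [NonAssocSemiring R]
    {A : Matrix ι ι R} {c : ι → κ} (hclosed : ∀ i j, c i ≠ c j → A i j = 0)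
    (hA1 : ∀ i, ∑ j, A i j = 1) (f : κ → R) (i : ι) : ∑ k, A i k * f (c k) = f (c i) := by
  calc ∑ k, A i k * f (c k) = ∑ k, A i k * f (c i) := by
        refine Finset.sum_congr rfl fun k _ => ?_
        by_cases h : c i = c k
        · rw [h]
        · rw [hclosed i k h, zero_mul, zero_mul]
    _ = f (c i) := by rw [← Finset.sum_mul, hA1, one_mul]

theorem zeonSq_mulVec_of_closed {n : ℕ} {κ R : Type*} [CommRing R] {A : Matrix (Fin n) (Fin n) R}
    {c : Fin n → κ} (hclosed : ∀ i j, c i ≠ c j → A i j = 0) (hA1 : ∀ i, ∑ j, A i j = 1)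
    (ψ : κ → κ → R) (hψ : ∀ a b, ψ a b = ψ b a) (hψ₀ : ∀ a, ψ a a = 0) :
    zeonSq A *ᵥ (fun J => ψ (c J.1.1) (c J.1.2)) = fun J => ψ (c J.1.1) (c J.1.2) := by
  funext I
  rw [zeonSq_mulVec_apply_s14 A (fun k l => ψ (c k) (c l)) (fun _ _ => hψ _ _) (fun _ => hψ₀ _)]
  simp_rw [mul_assoc, ← Finset.mul_sum, sum_mul_comp_of_closed hclosed hA1 (ψ _),
    sum_mul_comp_of_closed hclosed hA1 (ψ · (c I.1.2))]

theorem det_one_sub_eq_zero_of_mulVec_eq {ι R : Type*} [Fintype ι] [DecidableEq ι] [CommRing R]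
    [IsDomain R] {M : Matrix ι ι R} {v : ι → R} (hv : v ≠ 0) (hMv : M *ᵥ v = v) :
    (1 - M).det = 0 :=
  exists_mulVec_eq_zero_iff.mp ⟨v, hv, by rw [sub_mulVec, one_mulVec, hMv, sub_self]⟩

theorem exists_pair_apply_ne {n s : ℕ} (hs : 1 < s) {c : Fin n → Fin s}
    (hc : Function.Surjective c) : ∃ I : Pairs n, c I.1.1 ≠ c I.1.2 := by
  obtain ⟨i, hi⟩ := hc ⟨0, by omega⟩
  obtain ⟨j, hj⟩ := hc ⟨1, hs⟩
  have hij : c i ≠ c j := by simp [hi, hj]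
  rcases lt_or_gt_of_ne (ne_of_apply_ne c hij) with h | h
  · exact ⟨⟨(i, j), h⟩, hij⟩
  · exact ⟨⟨(j, i), h⟩, hij.symm⟩

theorem stmt14_general {n s : ℕ} (hs : 1 < s) (A : Matrix (Fin n) (Fin n) ℚ)
    (hA1 : ∀ i, ∑ j, A i j = 1)
    (c : Fin n → Fin s) (hc : Function.Surjective c)
    (hclosed : ∀ i j, c i ≠ c j → A i j = 0)
    (X : Pairs n → ℚ)
    (hX : ∀ I : Pairs n, X I = if c I.1.1 = c I.1.2 then 0 else 1) :
    zeonSq A *ᵥ X = X ∧ (1 - zeonSq A).det = 0 := by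
  have hfix : zeonSq A *ᵥ X = X := by
    rw [funext hX]
    exact zeonSq_mulVec_of_closed hclosed hA1 (fun a b => if a = b then 0 else 1)
      (fun a b => by simp only [eq_comm]) (fun a => if_pos rfl)
  obtain ⟨I, hI⟩ := exists_pair_apply_ne hs hc
  have hX0 : X ≠ 0 := fun h => by simpa [hX, hI] using congrFun h I
  exact ⟨hfix, det_one_sub_eq_zero_of_mulVec_eq hX0 hfix⟩

theorem stmt14 {n s : ℕ} (hs : 1 < s) (A : Matrix (Fin n) (Fin n) ℚ)
    (hA0 : ∀ i j, 0 ≤ A i j) (hA1 : ∀ i, ∑ j, A i j = 1)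
    (c : Fin n → Fin s) (hc : Function.Surjective c)
    (hclosed : ∀ i j, c i ≠ c j → A i j = 0)
    (X : Pairs n → ℚ)
    (hX : ∀ I : Pairs n, X I = if c I.1.1 = c I.1.2 then 0 else 1) :
    zeonSq A *ᵥ X = X ∧ (1 - zeonSq A).det = 0 :=
  stmt14_general hs A hA1 c hc hclosed X hX
end

section
/- If A is an n×n row-stochastic matrix, then every nonnegative eigenvalue λ of A^{∨2} possessing a nonnegative eigenvector X ≠ 0 (with X·A^{∨2} = λX) satisfies λ ≤ 1. -/
/-!
Summing the eigenvector equation over all pairs gives `λ ∑ X = X ⬝ᵥ (A^{∨2} 1)`. The row of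
`A^{∨2}` at `(i, j)` sums to the mass that the product distribution `A i ⊗ A j` puts off the
diagonal, hence to at most `1`; as `X ≥ 0` with `∑ X > 0`, this forces `λ ≤ 1`.
-/

open Matrix BigOperators Filter

theorem sum_lt_pairs_add_swap_le_sum {ι R : Type*} [Fintype ι] [LinearOrder ι]
    [AddCommMonoid R] [PartialOrder R] [IsOrderedAddMonoid R]
    {f : ι × ι → R} (hf : 0 ≤ f) :
    ∑ p : {p : ι × ι // p.1 < p.2}, (f p + f p.1.swap) ≤ ∑ p, f p := by
  have hswap : ∑ p : {p : ι × ι // p.1 < p.2}, f p.1.swap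
      = ∑ p : {p : ι × ι // p.2 < p.1}, f p :=
    Fintype.sum_equiv ((Equiv.prodComm ι ι).subtypeEquiv (p := fun p => p.1 < p.2)
      (q := fun p => p.2 < p.1) fun _ => Iff.rfl)
      (fun p => f p.1.swap) (fun p => f p) fun _ => rfl
  have hgt :
      ∑ p : {p : ι × ι // p.2 < p.1}, f p ≤ ∑ p : {p : ι × ι // ¬ p.1 < p.2}, f p := by
    rw [← Finset.sum_subtype _ Finset.mem_filter_univ f,
      ← Finset.sum_subtype _ Finset.mem_filter_univ f]
    exact Finset.sum_le_sum_of_subset_of_nonneg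
      (fun p hp => Finset.mem_filter_univ p |>.mpr (Finset.mem_filter_univ p |>.mp hp).not_gt)
      fun p _ _ => hf p
  calc ∑ p : {p : ι × ι // p.1 < p.2}, (f p + f p.1.swap)
      ≤ ∑ p : {p : ι × ι // p.1 < p.2}, f p
          + ∑ p : {p : ι × ι // ¬ p.1 < p.2}, f p := by
        rw [Finset.sum_add_distrib, hswap]; gcongr
    _ = ∑ p, f p := Fintype.sum_subtype_add_sum_subtype _ f

theorem sum_zeonSq_row_le_one {n : ℕ} {R : Type*} [CommRing R] [PartialOrder R] [IsOrderedRing R]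
    {A : Matrix (Fin n) (Fin n) R} (hA0 : ∀ i j, 0 ≤ A i j) (hA1 : ∀ i, ∑ j, A i j = 1)
    (I : Pairs n) : ∑ J, zeonSq A I J ≤ 1 :=
  calc ∑ J, zeonSq A I J
      ≤ ∑ p : Fin n × Fin n, A I.1.1 p.1 * A I.1.2 p.2 :=
        sum_lt_pairs_add_swap_le_sum fun p => mul_nonneg (hA0 _ _) (hA0 _ _)
    _ = (∑ j, A I.1.1 j) * ∑ j, A I.1.2 j := by
        rw [Finset.sum_mul_sum, Fintype.sum_prod_type]
    _ = 1 := by rw [hA1, hA1, one_mul]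

theorem le_one_of_vecMul_eq_smul {ι R : Type*} [Fintype ι] [Field R] [LinearOrder R]
    [IsStrictOrderedRing R] {M : Matrix ι ι R} (hM : ∀ i, ∑ j, M i j ≤ 1)
    {X : ι → R} (hX : 0 ≤ X) (hX0 : X ≠ 0) {lam : R} (heig : X ᵥ* M = lam • X) :
    lam ≤ 1 := by
  have hpos : 0 < X ⬝ᵥ 1 := by
    obtain ⟨i, hi⟩ := Function.ne_iff.mp hX0
    rw [dotProduct_one]
    exact Finset.sum_pos' (fun j _ => hX j) ⟨i, Finset.mem_univ i, (hX i).lt_of_ne' hi⟩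
  refine le_of_mul_le_mul_right ?_ hpos
  calc lam * X ⬝ᵥ 1 = X ⬝ᵥ (M *ᵥ 1) := by
        rw [dotProduct_mulVec, heig, smul_dotProduct, smul_eq_mul]
    _ ≤ X ⬝ᵥ 1 :=
        dotProduct_le_dotProduct_of_nonneg_left
          (fun i => by simpa [mulVec, dotProduct] using hM i) hX
    _ = 1 * X ⬝ᵥ 1 := (one_mul _).symm

theorem stmt16_general {n : ℕ} (A : Matrix (Fin n) (Fin n) ℚ)
    (hA0 : ∀ i j, 0 ≤ A i j) (hA1 : ∀ i, ∑ j, A i j = 1)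
    (lam : ℚ)
    (X : Pairs n → ℚ) (hX : ∀ I, 0 ≤ X I) (hX0 : X ≠ 0)
    (heig : X ᵥ* zeonSq A = lam • X) :
    lam ≤ 1 :=
  le_one_of_vecMul_eq_smul (sum_zeonSq_row_le_one hA0 hA1) hX hX0 heig

theorem stmt16 {n : ℕ} (A : Matrix (Fin n) (Fin n) ℚ)
    (hA0 : ∀ i j, 0 ≤ A i j) (hA1 : ∀ i, ∑ j, A i j = 1)
    (lam : ℚ) (hlam : 0 ≤ lam)
    (X : Pairs n → ℚ) (hX : ∀ I, 0 ≤ X I) (hX0 : X ≠ 0)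
    (heig : X ᵥ* zeonSq A = lam • X) :
    lam ≤ 1 :=
  stmt16_general A hA0 hA1 lam X hX hX0 heig
end
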